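/- (Equivalence of the new formulation, incompressible case.) (a) If (u, p) is a smooth (C^∞) solution of the steady incompressible Euler equations on U with u₁ > 0 everywhere, then β₂ = u₂/u₁, β₃ = u₃/u₁ and p satisfy on U: ∂₂β₂ + ∂₃β₃ − (1/u₁²)∂₁p = 0; Dβ₂ − (β₂/u₁²)∂₁p + (1/u₁²)∂₂p = 0; Dβ₃ − (β₃/u₁²)∂₁p + (1/u₁²)∂₃p = 0; DB = 0, where u₁² = 2(B − p)/(1 + β₂² + β₃²). (b) Conversely, if smooth functions (p, β₂, β₃, B) on U satisfy these four equations with B > p everywhere, where u₁ is defined by u₁ = √(2(B − p)/(1 + β₂² + β₃²)), then (u₁, β₂u₁, β₃u₁, p) solves the steady incompressible Euler equations on U. -/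

import Mathlib

/-- Partial derivative in direction `i` of a scalar function on `ℝ³`. -/
noncomputable def pd (i : Fin 3) (f : (Fin 3 → ℝ) → ℝ) (x : Fin 3 → ℝ) : ℝ :=
  fderiv ℝ f x (Pi.single i 1)

/-- The operator `D = ∂₁ + β₂ ∂₂ + β₃ ∂₃`. -/
noncomputable def Dop (β₂ β₃ : (Fin 3 → ℝ) → ℝ) (f : (Fin 3 → ℝ) → ℝ) (x : Fin 3 → ℝ) : ℝ :=
  pd 0 f x + β₂ x * pd 1 f x + β₃ x * pd 2 f x

/-- The steady incompressible Euler equations on `U`. -/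
def IncEuler (U : Set (Fin 3 → ℝ)) (u : Fin 3 → (Fin 3 → ℝ) → ℝ)
    (p : (Fin 3 → ℝ) → ℝ) : Prop :=
  (∀ x ∈ U, pd 0 (u 0) x + pd 1 (u 1) x + pd 2 (u 2) x = 0) ∧
  (∀ i : Fin 3, ∀ x ∈ U,
    u 0 x * pd 0 (u i) x + u 1 x * pd 1 (u i) x + u 2 x * pd 2 (u i) x + pd i p x = 0)

/-- The new formulation (5.4) of the incompressible Euler equations, where `u₁`
is the first velocity component. -/
def IncNewSystem (U : Set (Fin 3 → ℝ)) (u₁ p β₂ β₃ B : (Fin 3 → ℝ) → ℝ) : Prop :=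
  ∀ x ∈ U,
    (pd 1 β₂ x + pd 2 β₃ x - 1 / (u₁ x) ^ 2 * pd 0 p x = 0) ∧
    (Dop β₂ β₃ β₂ x - β₂ x / (u₁ x) ^ 2 * pd 0 p x + 1 / (u₁ x) ^ 2 * pd 1 p x = 0) ∧
    (Dop β₂ β₃ β₃ x - β₃ x / (u₁ x) ^ 2 * pd 0 p x + 1 / (u₁ x) ^ 2 * pd 2 p x = 0) ∧
    (Dop β₂ β₃ B x = 0)

/-- The velocity field reconstructed from `(p, β₂, β₃, B)` via
`u₁ = √(2(B − p)/(1 + β₂² + β₃²))`, `u₂ = β₂ u₁`, `u₃ = β₃ u₁`. -/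
noncomputable def uFromInc (p β₂ β₃ B : (Fin 3 → ℝ) → ℝ) : Fin 3 → (Fin 3 → ℝ) → ℝ :=
  ![fun y => Real.sqrt (2 * (B y - p y) / (1 + β₂ y ^ 2 + β₃ y ^ 2)),
    fun y => β₂ y * Real.sqrt (2 * (B y - p y) / (1 + β₂ y ^ 2 + β₃ y ^ 2)),
    fun y => β₃ y * Real.sqrt (2 * (B y - p y) / (1 + β₂ y ^ 2 + β₃ y ^ 2))]

variable {f g : (Fin 3 → ℝ) → ℝ} {x : Fin 3 → ℝ} {i : Fin 3}

lemma pd_eval {f' : (Fin 3 → ℝ) →L[ℝ] ℝ} (h : HasFDerivAt f f' x) :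
    pd i f x = f' (Pi.single i 1) := by
  rw [pd, h.fderiv]

lemma pd_add (hf : DifferentiableAt ℝ f x) (hg : DifferentiableAt ℝ g x) :
    pd i (fun y => f y + g y) x = pd i f x + pd i g x := by
  rw [pd_eval (f := fun y => f y + g y) (hf.hasFDerivAt.add hg.hasFDerivAt)]
  simp [pd]

lemma pd_mul (hf : DifferentiableAt ℝ f x) (hg : DifferentiableAt ℝ g x) :
    pd i (fun y => f y * g y) x = pd i f x * g x + f x * pd i g x := by
  rw [pd_eval (f := fun y => f y * g y) (hf.hasFDerivAt.mul hg.hasFDerivAt)]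
  simp [pd]
  ring

lemma pd_div (hf : DifferentiableAt ℝ f x) (hg : DifferentiableAt ℝ g x) (h0 : g x ≠ 0) :
    pd i (fun y => f y / g y) x
      = (pd i f x * g x - f x * pd i g x) / (g x) ^ 2 := by
  have hinv : HasFDerivAt (fun y => (g y)⁻¹) ((-(g x ^ 2)⁻¹) • fderiv ℝ g x) x :=
    (hasDerivAt_inv h0).comp_hasFDerivAt x hg.hasFDerivAt
  have h2 : HasFDerivAt (fun y => f y / g y)
      (f x • ((-(g x ^ 2)⁻¹) • fderiv ℝ g x) + (g x)⁻¹ • fderiv ℝ f x) x := by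
    have h3 : HasFDerivAt (fun y => f y * (g y)⁻¹)
        (f x • ((-(g x ^ 2)⁻¹) • fderiv ℝ g x) + (g x)⁻¹ • fderiv ℝ f x) x :=
      hf.hasFDerivAt.mul hinv
    simpa [div_eq_mul_inv] using h3
  rw [pd_eval h2]
  simp [pd]
  field_simp
  ring

lemma pd_sq (hf : DifferentiableAt ℝ f x) :
    pd i (fun y => f y ^ 2) x = 2 * f x * pd i f x := by
  have := pd_mul (i := i) hf hf
  simp only [← pow_two] at this
  rw [this]; ring

lemma pd_sqrt (hf : DifferentiableAt ℝ f x) (h0 : 0 < f x) :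
    pd i (fun y => Real.sqrt (f y)) x = pd i f x / (2 * Real.sqrt (f x)) := by
  rw [pd_eval (hf.hasFDerivAt.sqrt h0.ne')]
  simp [pd]
  ring

lemma pd_div_const (hf : DifferentiableAt ℝ f x) (c : ℝ) :
    pd i (fun y => f y / c) x = pd i f x / c := by
  have h : HasFDerivAt (fun y => f y / c) (c⁻¹ • fderiv ℝ f x) x := by
    have h3 : HasFDerivAt (fun y => c⁻¹ • f y) (c⁻¹ • fderiv ℝ f x) x :=
      hf.hasFDerivAt.const_smul c⁻¹
    simpa [div_eq_inv_mul, smul_smul] using h3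
  rw [pd_eval h]
  simp [pd, div_eq_inv_mul]

lemma pd_const_add (hf : DifferentiableAt ℝ f x) (c : ℝ) :
    pd i (fun y => c + f y) x = pd i f x := by
  rw [pd_eval (f := fun y => c + f y) ((hasFDerivAt_const c x).add hf.hasFDerivAt)]
  simp [pd]

lemma pd_sub (hf : DifferentiableAt ℝ f x) (hg : DifferentiableAt ℝ g x) :
    pd i (fun y => f y - g y) x = pd i f x - pd i g x := by
  rw [pd_eval (f := fun y => f y - g y) (hf.hasFDerivAt.sub hg.hasFDerivAt)]
  simp [pd]

lemma pd_const_mul (hf : DifferentiableAt ℝ f x) (c : ℝ) :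
    pd i (fun y => c * f y) x = c * pd i f x := by
  rw [pd_eval (hf.hasFDerivAt.const_mul c)]
  simp [pd]

lemma diffAt_div (hf : DifferentiableAt ℝ f x) (hg : DifferentiableAt ℝ g x) (h0 : g x ≠ 0) :
    DifferentiableAt ℝ (fun y => f y / g y) x := by
  have hinv : HasFDerivAt (fun y => (g y)⁻¹) ((-(g x ^ 2)⁻¹) • fderiv ℝ g x) x :=
    (hasDerivAt_inv h0).comp_hasFDerivAt x hg.hasFDerivAt
  exact ((hf.hasFDerivAt.mul hinv).differentiableAt).congr_of_eventuallyEq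
    (by filter_upwards with y; rw [div_eq_mul_inv]; rfl)



/-- equivalence between the steady incompressible Euler equations
and the new formulation (5.4). -/
theorem incompressible_euler_equiv_new_formulation :
    -- (a) every smooth incompressible Euler solution with `u₁ > 0` satisfies the new system
    (∀ (U : Set (Fin 3 → ℝ)), IsOpen U →
      ∀ (u : Fin 3 → (Fin 3 → ℝ) → ℝ) (p : (Fin 3 → ℝ) → ℝ),
        (∀ i, ContDiffOn ℝ (⊤ : ℕ∞) (u i) U) → ContDiffOn ℝ (⊤ : ℕ∞) p U →
        (∀ x ∈ U, 0 < u 0 x) → IncEuler U u p →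
        IncNewSystem U (u 0) p (fun y => u 1 y / u 0 y) (fun y => u 2 y / u 0 y)
          (fun y => (u 0 y ^ 2 + u 1 y ^ 2 + u 2 y ^ 2) / 2 + p y)) ∧
    -- (b) every smooth solution of the new system with `B > p` gives an Euler solution
    (∀ (U : Set (Fin 3 → ℝ)), IsOpen U →
      ∀ (p β₂ β₃ B : (Fin 3 → ℝ) → ℝ),
        ContDiffOn ℝ (⊤ : ℕ∞) p U → ContDiffOn ℝ (⊤ : ℕ∞) β₂ U → ContDiffOn ℝ (⊤ : ℕ∞) β₃ U →
        ContDiffOn ℝ (⊤ : ℕ∞) B U →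
        (∀ x ∈ U, p x < B x) →
        IncNewSystem U (uFromInc p β₂ β₃ B 0) p β₂ β₃ B →
        IncEuler U (uFromInc p β₂ β₃ B) p) := by
  constructor
  · -- part (a)
    intro U hU u p hu hp hpos heuler x hx
    obtain ⟨hdiv, hmom⟩ := heuler
    have du : ∀ i, DifferentiableAt ℝ (u i) x := fun i =>
      ((hu i).contDiffAt (hU.mem_nhds hx)).differentiableAt (by simp)
    have dp : DifferentiableAt ℝ p x :=
      (hp.contDiffAt (hU.mem_nhds hx)).differentiableAt (by simp)
    have hne : u 0 x ≠ 0 := (hpos x hx).ne'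
    have hb2 : ∀ j : Fin 3, pd j (fun y => u 1 y / u 0 y) x
        = (pd j (u 1) x * u 0 x - u 1 x * pd j (u 0) x) / (u 0 x) ^ 2 :=
      fun j => pd_div (du 1) (du 0) hne
    have hb3 : ∀ j : Fin 3, pd j (fun y => u 2 y / u 0 y) x
        = (pd j (u 2) x * u 0 x - u 2 x * pd j (u 0) x) / (u 0 x) ^ 2 :=
      fun j => pd_div (du 2) (du 0) hne
    have dsq : DifferentiableAt ℝ (fun y => (u 0 y ^ 2 + u 1 y ^ 2 + u 2 y ^ 2) / 2) x :=
      by fun_prop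
    have hB : ∀ j : Fin 3, pd j (fun y => (u 0 y ^ 2 + u 1 y ^ 2 + u 2 y ^ 2) / 2 + p y) x
        = u 0 x * pd j (u 0) x + u 1 x * pd j (u 1) x + u 2 x * pd j (u 2) x + pd j p x := by
      intro j
      rw [pd_add dsq dp,
        pd_div_const (f := fun y => u 0 y ^ 2 + u 1 y ^ 2 + u 2 y ^ 2)
          ((((du 0).pow 2).add ((du 1).pow 2)).add ((du 2).pow 2)) (2:ℝ),
        pd_add (f := fun y => u 0 y ^ 2 + u 1 y ^ 2) (g := fun y => u 2 y ^ 2)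
          (((du 0).pow 2).add ((du 1).pow 2)) ((du 2).pow 2),
        pd_add (f := fun y => u 0 y ^ 2) (g := fun y => u 1 y ^ 2)
          ((du 0).pow 2) ((du 1).pow 2),
        pd_sq (du 0), pd_sq (du 1), pd_sq (du 2)]
      ring
    have h1 := hdiv x hx
    have hm0 := hmom 0 x hx
    have hm1 := hmom 1 x hx
    have hm2 := hmom 2 x hx
    refine ⟨?_, ?_, ?_, ?_⟩
    · rw [hb2 1, hb3 2]
      field_simp
      linear_combination (u 0 x) * h1 - hm0
    · simp only [Dop]
      rw [hb2 0, hb2 1, hb2 2]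
      field_simp
      linear_combination (u 0 x) * hm1 - (u 1 x) * hm0
    · simp only [Dop]
      rw [hb3 0, hb3 1, hb3 2]
      field_simp
      linear_combination (u 0 x) * hm2 - (u 2 x) * hm0
    · simp only [Dop]
      rw [hB 0, hB 1, hB 2]
      field_simp
      linear_combination (u 0 x) * hm0 + (u 1 x) * hm1 + (u 2 x) * hm2
  · -- part (b)
    intro U hU p β₂ β₃ B hp hb2 hb3 hB hlt hsys
    -- pointwise key facts
    have main : ∀ x ∈ U,
        (pd 0 (uFromInc p β₂ β₃ B 0) x + pd 1 (uFromInc p β₂ β₃ B 1) x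
          + pd 2 (uFromInc p β₂ β₃ B 2) x = 0) ∧
        (∀ i : Fin 3,
          uFromInc p β₂ β₃ B 0 x * pd 0 (uFromInc p β₂ β₃ B i) x
          + uFromInc p β₂ β₃ B 1 x * pd 1 (uFromInc p β₂ β₃ B i) x
          + uFromInc p β₂ β₃ B 2 x * pd 2 (uFromInc p β₂ β₃ B i) x + pd i p x = 0) := by
      intro x hx
      have hxU : U ∈ nhds x := hU.mem_nhds hx
      have dp : DifferentiableAt ℝ p x := (hp.contDiffAt hxU).differentiableAt (by simp)
      have db2 : DifferentiableAt ℝ β₂ x := (hb2.contDiffAt hxU).differentiableAt (by simp)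
      have db3 : DifferentiableAt ℝ β₃ x := (hb3.contDiffAt hxU).differentiableAt (by simp)
      have dB : DifferentiableAt ℝ B x := (hB.contDiffAt hxU).differentiableAt (by simp)
      have hmx : (0:ℝ) < 1 + β₂ x ^ 2 + β₃ x ^ 2 := by positivity
      have hEx : (0:ℝ) < B x - p x := sub_pos.mpr (hlt x hx)
      have hQx : (0:ℝ) < 2 * (B x - p x) / (1 + β₂ x ^ 2 + β₃ x ^ 2) :=
        div_pos (by linarith) hmx
      have dN : DifferentiableAt ℝ (fun y => 2 * (B y - p y)) x := by fun_prop
      have dm : DifferentiableAt ℝ (fun y => 1 + β₂ y ^ 2 + β₃ y ^ 2) x := by fun_prop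
      have dQ : DifferentiableAt ℝ
          (fun y => 2 * (B y - p y) / (1 + β₂ y ^ 2 + β₃ y ^ 2)) x :=
        diffAt_div dN dm hmx.ne'
      have du1 : DifferentiableAt ℝ
          (fun y => Real.sqrt (2 * (B y - p y) / (1 + β₂ y ^ 2 + β₃ y ^ 2))) x :=
        (dQ.hasFDerivAt.sqrt hQx.ne').differentiableAt
      set s : ℝ := Real.sqrt (2 * (B x - p x) / (1 + β₂ x ^ 2 + β₃ x ^ 2)) with hs_def
      have hs : 0 < s := Real.sqrt_pos.mpr hQx
      have hsq : s ^ 2 = 2 * (B x - p x) / (1 + β₂ x ^ 2 + β₃ x ^ 2) := Real.sq_sqrt hQx.le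
      have key : s ^ 2 * (1 + β₂ x ^ 2 + β₃ x ^ 2) = 2 * (B x - p x) := by
        rw [hsq]; field_simp
      -- pd of Q
      have hQpd : ∀ j : Fin 3,
          pd j (fun y => 2 * (B y - p y) / (1 + β₂ y ^ 2 + β₃ y ^ 2)) x
            = (2 * (pd j B x - pd j p x) * (1 + β₂ x ^ 2 + β₃ x ^ 2)
               - 2 * (B x - p x) * (2 * β₂ x * pd j β₂ x + 2 * β₃ x * pd j β₃ x))
              / (1 + β₂ x ^ 2 + β₃ x ^ 2) ^ 2 := by
        intro j
        rw [pd_div (f := fun y => 2 * (B y - p y)) (g := fun y => 1 + β₂ y ^ 2 + β₃ y ^ 2)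
              dN dm hmx.ne',
            pd_const_mul (f := fun y => B y - p y) (dB.sub dp) 2,
            pd_sub dB dp,
            pd_add (f := fun y => 1 + β₂ y ^ 2) (g := fun y => β₃ y ^ 2)
              (by fun_prop) (by fun_prop),
            pd_const_add (f := fun y => β₂ y ^ 2) (db2.pow 2) 1,
            pd_sq db2, pd_sq db3]
      -- pd of u₁, cleared of denominators
      have hA : ∀ j : Fin 3,
          2 * s * (1 + β₂ x ^ 2 + β₃ x ^ 2) ^ 2
              * pd j (fun y => Real.sqrt (2 * (B y - p y) / (1 + β₂ y ^ 2 + β₃ y ^ 2))) x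
            = 2 * (pd j B x - pd j p x) * (1 + β₂ x ^ 2 + β₃ x ^ 2)
               - 2 * (B x - p x) * (2 * β₂ x * pd j β₂ x + 2 * β₃ x * pd j β₃ x) := by
        intro j
        rw [pd_sqrt dQ hQx, hQpd j, ← hs_def]
        field_simp
      -- the hypotheses of the new system at x, in polynomial form
      obtain ⟨h1, h2, h3, h4⟩ := hsys x hx
      simp only [uFromInc, Matrix.cons_val_zero, Dop, ← hs_def] at h1 h2 h3 h4
      rw [hsq] at h1 h2 h3
      have h1' : 2 * (B x - p x) * (pd 1 β₂ x + pd 2 β₃ x)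
          - (1 + β₂ x ^ 2 + β₃ x ^ 2) * pd 0 p x = 0 := by
        field_simp at h1
        linear_combination h1
      have h2' : 2 * (B x - p x) * (pd 0 β₂ x + β₂ x * pd 1 β₂ x + β₃ x * pd 2 β₂ x)
          - (1 + β₂ x ^ 2 + β₃ x ^ 2) * (β₂ x * pd 0 p x)
          + (1 + β₂ x ^ 2 + β₃ x ^ 2) * pd 1 p x = 0 := by
        field_simp at h2
        linear_combination h2
      have h3' : 2 * (B x - p x) * (pd 0 β₃ x + β₂ x * pd 1 β₃ x + β₃ x * pd 2 β₃ x)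
          - (1 + β₂ x ^ 2 + β₃ x ^ 2) * (β₃ x * pd 0 p x)
          + (1 + β₂ x ^ 2 + β₃ x ^ 2) * pd 2 p x = 0 := by
        field_simp at h3
        linear_combination h3
      -- first momentum equation
      set P0 := pd 0 (fun y => Real.sqrt (2 * (B y - p y) / (1 + β₂ y ^ 2 + β₃ y ^ 2))) x
      set P1 := pd 1 (fun y => Real.sqrt (2 * (B y - p y) / (1 + β₂ y ^ 2 + β₃ y ^ 2))) x
      set P2 := pd 2 (fun y => Real.sqrt (2 * (B y - p y) / (1 + β₂ y ^ 2 + β₃ y ^ 2))) x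
      have hmom1 : s * P0 + β₂ x * s * P1 + β₃ x * s * P2 + pd 0 p x = 0 := by
        have big : 2 * (1 + β₂ x ^ 2 + β₃ x ^ 2) ^ 2
            * (s * P0 + β₂ x * s * P1 + β₃ x * s * P2 + pd 0 p x) = 0 := by
          linear_combination hA 0 + β₂ x * hA 1 + β₃ x * hA 2
            + 2 * (1 + β₂ x ^ 2 + β₃ x ^ 2) * h4 - 2 * β₂ x * h2' - 2 * β₃ x * h3'
        have hne : (2 * (1 + β₂ x ^ 2 + β₃ x ^ 2) ^ 2 : ℝ) ≠ 0 := by positivity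
        exact (mul_eq_zero.mp big).resolve_left hne
      -- second momentum equation
      have hmom2 : s * (pd 0 β₂ x * s + β₂ x * P0)
          + β₂ x * s * (pd 1 β₂ x * s + β₂ x * P1)
          + β₃ x * s * (pd 2 β₂ x * s + β₂ x * P2) + pd 1 p x = 0 := by
        have big : (1 + β₂ x ^ 2 + β₃ x ^ 2)
            * (s * (pd 0 β₂ x * s + β₂ x * P0)
              + β₂ x * s * (pd 1 β₂ x * s + β₂ x * P1)
              + β₃ x * s * (pd 2 β₂ x * s + β₂ x * P2) + pd 1 p x) = 0 := by
          linear_combination (pd 0 β₂ x + β₂ x * pd 1 β₂ x + β₃ x * pd 2 β₂ x) * key + h2'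
            + β₂ x * (1 + β₂ x ^ 2 + β₃ x ^ 2) * hmom1
        exact (mul_eq_zero.mp big).resolve_left hmx.ne'
      have hmom3 : s * (pd 0 β₃ x * s + β₃ x * P0)
          + β₂ x * s * (pd 1 β₃ x * s + β₃ x * P1)
          + β₃ x * s * (pd 2 β₃ x * s + β₃ x * P2) + pd 2 p x = 0 := by
        have big : (1 + β₂ x ^ 2 + β₃ x ^ 2)
            * (s * (pd 0 β₃ x * s + β₃ x * P0)
              + β₂ x * s * (pd 1 β₃ x * s + β₃ x * P1)
              + β₃ x * s * (pd 2 β₃ x * s + β₃ x * P2) + pd 2 p x) = 0 := by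
          linear_combination (pd 0 β₃ x + β₂ x * pd 1 β₃ x + β₃ x * pd 2 β₃ x) * key + h3'
            + β₃ x * (1 + β₂ x ^ 2 + β₃ x ^ 2) * hmom1
        exact (mul_eq_zero.mp big).resolve_left hmx.ne'
      -- divergence
      have hdivg : P0 + (pd 1 β₂ x * s + β₂ x * P1) + (pd 2 β₃ x * s + β₃ x * P2) = 0 := by
        have big : (s * (1 + β₂ x ^ 2 + β₃ x ^ 2))
            * (P0 + (pd 1 β₂ x * s + β₂ x * P1) + (pd 2 β₃ x * s + β₃ x * P2)) = 0 := by
          linear_combination (1 + β₂ x ^ 2 + β₃ x ^ 2) * hmom1 + h1'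
            + (pd 1 β₂ x + pd 2 β₃ x) * key
        exact (mul_eq_zero.mp big).resolve_left (by positivity)
      -- pd of the velocity components
      have hpd2 : ∀ j : Fin 3,
          pd j (fun y => β₂ y * Real.sqrt (2 * (B y - p y) / (1 + β₂ y ^ 2 + β₃ y ^ 2))) x
            = pd j β₂ x * s + β₂ x * pd j
                (fun y => Real.sqrt (2 * (B y - p y) / (1 + β₂ y ^ 2 + β₃ y ^ 2))) x := by
        intro j
        rw [pd_mul db2 du1, ← hs_def]
      have hpd3 : ∀ j : Fin 3,
          pd j (fun y => β₃ y * Real.sqrt (2 * (B y - p y) / (1 + β₂ y ^ 2 + β₃ y ^ 2))) x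
            = pd j β₃ x * s + β₃ x * pd j
                (fun y => Real.sqrt (2 * (B y - p y) / (1 + β₂ y ^ 2 + β₃ y ^ 2))) x := by
        intro j
        rw [pd_mul db3 du1, ← hs_def]
      constructor
      · simp only [uFromInc, Matrix.cons_val_zero, Matrix.cons_val_one, Matrix.head_cons,
          Matrix.cons_val_two, Matrix.tail_cons]
        rw [hpd2 1, hpd3 2]
        exact hdivg
      · intro i
        fin_cases i <;>
          simp only [uFromInc, Fin.isValue, Matrix.cons_val_zero, Matrix.cons_val_one,
            Matrix.head_cons, Matrix.cons_val_two, Matrix.tail_cons, Fin.mk_one, Fin.mk_zero] <;>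
          [skip; skip; skip]
        · rw [← hs_def]
          exact hmom1
        · rw [hpd2 0, hpd2 1, hpd2 2, ← hs_def]
          linear_combination hmom2
        · rw [show ((⟨2, by norm_num⟩ : Fin 3)) = (2 : Fin 3) from rfl]
          simp only [Matrix.cons_val_two, Matrix.tail_cons, Matrix.head_cons]
          rw [hpd3 0, hpd3 1, hpd3 2, ← hs_def]
          linear_combination hmom3
    exact ⟨fun x hx => (main x hx).1, fun i x hx => (main x hx).2 i⟩
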